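/- arXiv:1905.05236 — 9 statements merged into one kernel-verified Lean document; each statement's English description precedes it below -/
import Mathlib

section
/- Let F be a norm on ℝ² with F(x,y) = F(|x|,|y|). Suppose P = (x,y) and P' = (x',y') satisfy F(P) = F(P'), 0 < x' < x, and 0 < |y| < y'. Then for every integer d ≥ 1, F(P - d·P') < F(P) + d·F(P'). -/
/-!
Write `r = F P = F P'`. Splitting off `(d - 1) • P'` reduces the claim to `F (P - P') < 2 r`, and
monotonicity of `F` in `|y|` bounds `F (P - P')` by `F ((x, |y|) + (-x', y'))`. If this sum had norm
`2 r`, then `F` would be affine on the segment from `(x, |y|)` to `(-x', y')`, hence equal to `r` at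
the point `(0, s)` where the segment crosses the vertical axis. But `|s| < y'`, and `F (0, y') ≤ r`
by monotonicity in `|x|`, so homogeneity forces `F (0, s) < r`.
-/

open Set

namespace Seminorm

variable {E : Type*} [AddCommGroup E] [Module ℝ E]

theorem map_smul_add_smul_eq_of_map_add_eq (p : Seminorm ℝ E) {u v : E}
    (huv : p (u + v) = p u + p v) {a b : ℝ} (ha : 0 ≤ a) (hb : 0 ≤ b) (hab : a + b = 1) :
    p (a • u + b • v) = a * p u + b * p v := by
  obtain rfl : b = 1 - a := by linarith
  have hle := p.convexOn.2 (mem_univ u) (mem_univ v) ha hb hab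
  have hle' := p.convexOn.2 (mem_univ u) (mem_univ v) hb ha (sub_add_cancel 1 a)
  have htri : p (u + v) ≤ p (a • u + (1 - a) • v) + p ((1 - a) • u + a • v) := by
    calc p (u + v) = p ((a • u + (1 - a) • v) + ((1 - a) • u + a • v)) := by congr 1; module
      _ ≤ _ := map_add_le_add p _ _
  simp only [smul_eq_mul] at hle hle'
  exact le_antisymm hle (by linarith)

end Seminorm

section Unconditional

variable {p : Seminorm ℝ (ℝ × ℝ)}

theorem map_le_map_of_abs_le_fst (hp : ∀ a b, p (a, b) = p (|a|, |b|)) {a a' : ℝ} (b : ℝ)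
    (ha : |a| ≤ a') : p (a, b) ≤ p (a', b) := by
  have ha' : 0 ≤ a' := (abs_nonneg a).trans ha
  have hmem : (a, b) ∈ segment ℝ ((-a', b) : ℝ × ℝ) (a', b) := by
    rw [← Prod.image_mk_segment_left, segment_eq_Icc (by linarith)]
    exact ⟨a, abs_le.mp ha, rfl⟩
  have hrefl : p (-a', b) = p (a', b) := by rw [hp, hp a', abs_neg]
  simpa [hrefl] using p.convexOn.le_on_segment (mem_univ _) (mem_univ _) hmem

theorem map_le_map_of_abs_le_snd (hp : ∀ a b, p (a, b) = p (|a|, |b|)) (a : ℝ) {b b' : ℝ}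
    (hb : |b| ≤ b') : p (a, b) ≤ p (a, b') := by
  have hb' : 0 ≤ b' := (abs_nonneg b).trans hb
  have hmem : (a, b) ∈ segment ℝ ((a, -b') : ℝ × ℝ) (a, b') := by
    rw [← Prod.image_mk_segment_right, segment_eq_Icc (by linarith)]
    exact ⟨b, abs_le.mp hb, rfl⟩
  have hrefl : p (a, -b') = p (a, b') := by rw [hp, hp a b', abs_neg]
  simpa [hrefl] using p.convexOn.le_on_segment (mem_univ _) (mem_univ _) hmem

theorem map_add_lt_of_abs_lt (hp : ∀ a b, p (a, b) = p (|a|, |b|)) {x η x' y' : ℝ}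
    (hx : 0 < x) (hx' : 0 < x') (hηy' : |η| < y') (heq : p (x, η) = p (x', y'))
    (hne : p (x', y') ≠ 0) :
    p ((x, η) + (-x', y')) < p (x, η) + p (-x', y') := by
  set r := p (x', y')
  have hr : 0 < r := lt_of_le_of_ne (apply_nonneg p _) hne.symm
  have hrefl : p (-x', y') = r := by rw [hp, abs_neg, ← hp]
  refine lt_of_le_of_ne (map_add_le_add p _ _) fun hadd => ?_
  set a := x' / (x + x')
  set b := x / (x + x')
  have ha : 0 < a := by positivity
  have hb : 0 < b := by positivity
  have hab : a + b = 1 := by rw [← add_div, add_comm, div_self (by positivity)]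
  set s := a * η + b * y'
  have hy' : 0 < y' := (abs_nonneg η).trans_lt hηy'
  have hcross : a • ((x, η) : ℝ × ℝ) + b • (-x', y') = (0, s) := by
    ext
    · simp only [Prod.fst_add, Prod.smul_fst, smul_eq_mul, a, b]; field_simp; ring
    · rfl
  have hs : |s| < y' := by
    calc |s| ≤ a * |η| + b * y' := by
          refine (abs_add_le _ _).trans ?_
          rw [abs_mul, abs_mul, abs_of_pos ha, abs_of_pos hb, abs_of_pos hy']
      _ < a * y' + b * y' := by gcongr
      _ = y' := by rw [← add_mul, hab, one_mul]
  have hps : p (0, s) = r := by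
    rw [← hcross, p.map_smul_add_smul_eq_of_map_add_eq hadd ha.le hb.le hab, heq, hrefl,
      ← add_mul, hab, one_mul]
  have hpy' : p (0, y') ≤ r := map_le_map_of_abs_le_fst hp y' (by simpa using hx'.le)
  have hscale : ((0, s) : ℝ × ℝ) = (s / y') • (0, y') := by
    ext <;> simp [hy'.ne']
  refine lt_irrefl r ?_
  calc r = |s| / y' * p (0, y') := by
        rw [← hps, hscale, map_smul_eq_mul, Real.norm_eq_abs, abs_div, abs_of_pos hy']
    _ ≤ |s| / y' * r := by gcongr
    _ < 1 * r := by gcongr; rwa [div_lt_one hy']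
    _ = r := one_mul r

end Unconditional

theorem stmt_3_general (F : ℝ × ℝ → ℝ)
    (hzero : ∀ P, F P = 0 ↔ P = 0)
    (hhom : ∀ (t : ℝ) (P), F (t • P) = |t| * F P)
    (htri : ∀ P Q, F (P + Q) ≤ F P + F Q)
    (hsym : ∀ x y : ℝ, F (x, y) = F (|x|, |y|))
    (x y x' y' : ℝ)
    (heq : F (x, y) = F (x', y'))
    (hx' : 0 < x') (hxx : x' < x)
    (hyy : |y| < y') :
    ∀ d : ℕ, 1 ≤ d →
      F ((x, y) - (d : ℝ) • (x', y')) < F (x, y) + (d : ℝ) * F (x', y') := by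
  intro d hd
  let p : Seminorm ℝ (ℝ × ℝ) := Seminorm.of F htri fun t P => hhom t P
  change p _ < p _ + _ * p _
  have hne : p (x', y') ≠ 0 := fun h => hx'.ne' (congrArg Prod.fst ((hzero _).mp h))
  have hp : ∀ a b, p (a, b) = p (|a|, |b|) := hsym
  have heq' : p (x, |y|) = p (x', y') := by rw [hp, abs_abs, ← hp]; exact heq
  have hrefl : p (-x', y') = p (x', y') := by rw [hp, abs_neg, ← hp]
  have hd' : (0 : ℝ) ≤ d - 1 := by simpa using (Nat.one_le_cast.mpr hd : (1 : ℝ) ≤ d)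
  have hdiff : p ((x, y) - (x', y')) < 2 * p (x', y') :=
    calc p ((x, y) - (x', y')) ≤ p ((x, |y|) + (-x', y')) := by
          simpa [sub_eq_add_neg] using map_le_map_of_abs_le_snd hp (x - x')
            ((abs_sub _ _).trans_eq (by rw [abs_of_pos ((abs_nonneg y).trans_lt hyy)]))
      _ < p (x, |y|) + p (-x', y') :=
          map_add_lt_of_abs_lt hp (hx'.trans hxx) hx' (by rwa [abs_abs]) heq' hne
      _ = 2 * p (x', y') := by rw [heq', hrefl, two_mul]
  calc p ((x, y) - (d : ℝ) • (x', y'))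
      = p (((x, y) - (x', y')) - ((d : ℝ) - 1) • (x', y')) := by congr 1; module
    _ ≤ p ((x, y) - (x', y')) + (d - 1) * p (x', y') := by
        grw [map_sub_le_add, map_smul_eq_mul, Real.norm_of_nonneg hd']
    _ < 2 * p (x', y') + (d - 1) * p (x', y') := by gcongr
    _ = p (x, y) + d * p (x', y') := by rw [show p (x, y) = p (x', y') from heq]; ring

theorem stmt_3 (F : ℝ × ℝ → ℝ)
    (hnonneg : ∀ P, 0 ≤ F P)
    (hzero : ∀ P, F P = 0 ↔ P = 0)
    (hhom : ∀ (t : ℝ) (P), F (t • P) = |t| * F P)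
    (htri : ∀ P Q, F (P + Q) ≤ F P + F Q)
    (hsym : ∀ x y : ℝ, F (x, y) = F (|x|, |y|))
    (x y x' y' : ℝ)
    (heq : F (x, y) = F (x', y'))
    (hx' : 0 < x') (hxx : x' < x)
    (hy : 0 < |y|) (hyy : |y| < y') :
    ∀ d : ℕ, 1 ≤ d →
      F ((x, y) - (d : ℝ) • (x', y')) < F (x, y) + (d : ℝ) * F (x', y') :=
  stmt_3_general F hzero hhom htri hsym x y x' y' heq hx' hxx hyy
end

section
/- Let F be a norm on ℝ² with F(x,y) = F(|x|,|y|), and F_t(x,y) = F(x/t, ty). For σ, σ' ∈ [0,1] with σ + σ' = 1 and 1 ≤ t₁ ≤ t₂, and any P ∈ ℝ², one has F_{σt₁ + σ't₂}(P) ≤ σ·F_{t₁}(P) + σ'·F_{t₂}(P). -/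
/-!
A norm is convex, so `F (σ • P₁ + σ' • P₂) ≤ σ F P₁ + σ' F P₂` with `Pᵢ = (tᵢ⁻¹ x, tᵢ y)`.
The second coordinate of `σ • P₁ + σ' • P₂` is exactly `t y` with `t = σ t₁ + σ' t₂`, while
its first coordinate is `(σ t₁⁻¹ + σ' t₂⁻¹) x`, which dominates `t⁻¹ x` in absolute value by
convexity of `t ↦ t⁻¹`. Since `F` is convex and even in the first coordinate, it is
monotone in the absolute value of that coordinate, which closes the gap.
-/

open Set

theorem convexOn_univ_of_subadditive_of_homogeneous {E : Type*} [AddCommGroup E] [Module ℝ E]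
    (F : E → ℝ) (hhom : ∀ t : ℝ, 0 ≤ t → ∀ P, F (t • P) = t * F P)
    (htri : ∀ P Q, F (P + Q) ≤ F P + F Q) : ConvexOn ℝ univ F :=
  ⟨convex_univ, fun P _ Q _ a b ha hb _ =>
    (htri _ _).trans_eq (by rw [hhom a ha, hhom b hb, smul_eq_mul, smul_eq_mul])⟩

theorem ConvexOn.apply_le_of_abs_fst_le {F : ℝ × ℝ → ℝ} (hF : ConvexOn ℝ univ F)
    (heven : ∀ x y, F (-x, y) = F (x, y)) {a b : ℝ} (hab : |a| ≤ |b|) (c : ℝ) :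
    F (a, c) ≤ F (b, c) := by
  have hb : F (|b|, c) = F (b, c) := by
    rcases abs_choice b with h | h <;> rw [h]
    exact heven b c
  have hmem : (a, c) ∈ segment ℝ (-|b|, c) (|b|, c) := by
    rw [← Prod.image_mk_segment_left, segment_eq_Icc (by simp)]
    exact ⟨a, abs_le.mp hab, rfl⟩
  calc F (a, c) ≤ max (F (-|b|, c)) (F (|b|, c)) := hF.le_on_segment trivial trivial hmem
    _ = F (b, c) := by rw [heven, max_self, hb]

theorem inv_convex_combination_le {σ σ' t₁ t₂ : ℝ} (hσ : 0 ≤ σ) (hσ' : 0 ≤ σ') (hsum : σ + σ' = 1)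
    (ht₁ : 0 < t₁) (ht₂ : 0 < t₂) : (σ * t₁ + σ' * t₂)⁻¹ ≤ σ * t₁⁻¹ + σ' * t₂⁻¹ := by
  simpa only [zpow_neg_one, smul_eq_mul] using
    (convexOn_zpow (𝕜 := ℝ) (-1)).2 (mem_Ioi.mpr ht₁) (mem_Ioi.mpr ht₂) hσ hσ' hsum

theorem stmt_4_general (F : ℝ × ℝ → ℝ)
    (hhom : ∀ (t : ℝ) (P), F (t • P) = |t| * F P)
    (htri : ∀ P Q, F (P + Q) ≤ F P + F Q)
    (hsym : ∀ x y : ℝ, F (x, y) = F (|x|, |y|))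
    (σ σ' t₁ t₂ : ℝ)
    (hσ0 : 0 ≤ σ) (hσ'0 : 0 ≤ σ')
    (hsum : σ + σ' = 1) (ht1 : 1 ≤ t₁) (ht12 : t₁ ≤ t₂)
    (x y : ℝ) :
    F ((σ * t₁ + σ' * t₂)⁻¹ * x, (σ * t₁ + σ' * t₂) * y) ≤
      σ * F (t₁⁻¹ * x, t₁ * y) + σ' * F (t₂⁻¹ * x, t₂ * y) := by
  have ht₁ : 0 < t₁ := by linarith
  have ht₂ : 0 < t₂ := by linarith
  have hconv : ConvexOn ℝ univ F := convexOn_univ_of_subadditive_of_homogeneous F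
    (fun t ht P => by rw [hhom, abs_of_nonneg ht]) htri
  have heven : ∀ x y, F (-x, y) = F (x, y) := fun x y => by rw [hsym, abs_neg, ← hsym]
  have hinv := inv_convex_combination_le hσ0 hσ'0 hsum ht₁ ht₂
  have habs : |(σ * t₁ + σ' * t₂)⁻¹ * x| ≤ |(σ * t₁⁻¹ + σ' * t₂⁻¹) * x| := by
    rw [abs_mul, abs_mul]
    exact mul_le_mul_of_nonneg_right (abs_le_abs_of_nonneg (by positivity) hinv) (abs_nonneg x)
  calc _ ≤ F ((σ * t₁⁻¹ + σ' * t₂⁻¹) * x, (σ * t₁ + σ' * t₂) * y) :=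
        hconv.apply_le_of_abs_fst_le heven habs _
    _ = F (σ • (t₁⁻¹ * x, t₁ * y) + σ' • (t₂⁻¹ * x, t₂ * y)) := by
        congr 1; ext <;> simp only [Prod.fst_add, Prod.snd_add, Prod.smul_fst, Prod.smul_snd,
          smul_eq_mul] <;> ring
    _ ≤ _ := hconv.2 trivial trivial hσ0 hσ'0 hsum

theorem stmt_4 (F : ℝ × ℝ → ℝ)
    (hnonneg : ∀ P, 0 ≤ F P)
    (hzero : ∀ P, F P = 0 ↔ P = 0)
    (hhom : ∀ (t : ℝ) (P), F (t • P) = |t| * F P)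
    (htri : ∀ P Q, F (P + Q) ≤ F P + F Q)
    (hsym : ∀ x y : ℝ, F (x, y) = F (|x|, |y|))
    (σ σ' t₁ t₂ : ℝ)
    (hσ0 : 0 ≤ σ) (hσ1 : σ ≤ 1) (hσ'0 : 0 ≤ σ') (hσ'1 : σ' ≤ 1)
    (hsum : σ + σ' = 1) (ht1 : 1 ≤ t₁) (ht12 : t₁ ≤ t₂)
    (x y : ℝ) :
    F ((σ * t₁ + σ' * t₂)⁻¹ * x, (σ * t₁ + σ' * t₂) * y) ≤
      σ * F (t₁⁻¹ * x, t₁ * y) + σ' * F (t₂⁻¹ * x, t₂ * y) :=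
  stmt_4_general F hhom htri hsym σ σ' t₁ t₂ hσ0 hσ'0 hsum ht1 ht12 x y
end

section
/- For 0 ≤ u, v < 1, the quantity D_p(u,v) := (1/(1+uv))·((1−u^p v^p)²/((1−u^p)(1−v^p)))^{1/p} satisfies D_p(u,v) ≥ D_p((u+v)/2, (u+v)/2), with equality only when u = v. -/
noncomputable def Dp (p u v : ℝ) : ℝ :=
  (1 / (1 + u * v)) *
    ((1 - u ^ p * v ^ p) ^ 2 / ((1 - u ^ p) * (1 - v ^ p))) ^ (1 / p)

/-!
On the diagonal the middle factor collapses: `D_p(m, m) = (1 + m^p)^{2/p} / (1 + m²)` with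
`m = (u + v)/2`. Convexity of `x ↦ x^p` gives `m^p ≤ (u^p + v^p)/2`, and for `a, b ∈ [0, 1)` with
`s = (a + b)/2` one has `(1 - ab)² - (1 + s)²(1 - a)(1 - b) = (s² - ab)(3 + 2s - ab) ≥ 0`, so the
`p`-th root factor of `D_p(u, v)` dominates that of `D_p(m, m)`. The prefactor `1/(1 + uv)` strictly
dominates `1/(1 + m²)` as soon as `u ≠ v`, by AM-GM.
-/

open Real

lemma one_add_midpoint_sq_mul_le {a b : ℝ} (ha0 : 0 ≤ a) (ha1 : a ≤ 1) (hb0 : 0 ≤ b) :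
    (1 + (a + b) / 2) ^ 2 * ((1 - a) * (1 - b)) ≤ (1 - a * b) ^ 2 := by
  have hamgm : 0 ≤ ((a + b) / 2) ^ 2 - a * b := by nlinarith [sq_nonneg (a - b)]
  have hsmall : 0 ≤ 3 + (a + b) - a * b := by nlinarith
  nlinarith [mul_nonneg hamgm hsmall]

lemma rpow_midpoint_le {p u v : ℝ} (hp : 1 ≤ p) (hu : 0 ≤ u) (hv : 0 ≤ v) :
    ((u + v) / 2) ^ p ≤ (u ^ p + v ^ p) / 2 := by
  have h := (convexOn_rpow hp).2 (Set.mem_Ici.mpr hu) (Set.mem_Ici.mpr hv)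
    (by norm_num : (0 : ℝ) ≤ 1 / 2) (by norm_num : (0 : ℝ) ≤ 1 / 2) (by norm_num)
  simp only [smul_eq_mul] at h
  calc ((u + v) / 2) ^ p = (1 / 2 * u + 1 / 2 * v) ^ p := by ring_nf
    _ ≤ 1 / 2 * u ^ p + 1 / 2 * v ^ p := h
    _ = (u ^ p + v ^ p) / 2 := by ring

lemma Dp_self {p m : ℝ} (hp : 0 < p) (hm0 : 0 ≤ m) (hm1 : m < 1) :
    Dp p m m = 1 / (1 + m * m) * ((1 + m ^ p) ^ 2) ^ (1 / p) := by
  have hc : 1 - m ^ p ≠ 0 := (sub_pos.mpr (rpow_lt_one hm0 hm1 hp)).ne'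
  unfold Dp
  congr 2
  field_simp
  ring

lemma Dp_midpoint_lt {p u v : ℝ} (hp : 1 ≤ p) (hu0 : 0 ≤ u) (hu1 : u < 1) (hv0 : 0 ≤ v)
    (hv1 : v < 1) (huv : u ≠ v) :
    Dp p ((u + v) / 2) ((u + v) / 2) < Dp p u v := by
  have hp0 : 0 < p := by linarith
  set m := (u + v) / 2 with hm
  set a := u ^ p
  set b := v ^ p
  have ha0 : 0 ≤ a := rpow_nonneg hu0 p
  have hb0 : 0 ≤ b := rpow_nonneg hv0 p
  have ha1 : a < 1 := rpow_lt_one hu0 hu1 hp0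
  have hb1 : b < 1 := rpow_lt_one hv0 hv1 hp0
  have hden : 0 < (1 - a) * (1 - b) := mul_pos (by linarith) (by linarith)
  have hroot : (1 + m ^ p) ^ 2 ≤ (1 - a * b) ^ 2 / ((1 - a) * (1 - b)) := by
    rw [le_div_iff₀ hden]
    calc (1 + m ^ p) ^ 2 * ((1 - a) * (1 - b))
        ≤ (1 + (a + b) / 2) ^ 2 * ((1 - a) * (1 - b)) := by
          gcongr
          exact rpow_midpoint_le hp hu0 hv0
      _ ≤ (1 - a * b) ^ 2 := one_add_midpoint_sq_mul_le ha0 ha1.le hb0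
  have hprod : u * v < m * m := by
    nlinarith [sq_pos_of_ne_zero (sub_ne_zero.mpr huv)]
  have hprefactor : 1 / (1 + m * m) < 1 / (1 + u * v) :=
    one_div_lt_one_div_of_lt (by positivity) (by linarith)
  rw [Dp_self hp0 (by positivity) (by linarith)]
  calc 1 / (1 + m * m) * ((1 + m ^ p) ^ 2) ^ (1 / p)
      < 1 / (1 + u * v) * ((1 + m ^ p) ^ 2) ^ (1 / p) := by gcongr
    _ ≤ 1 / (1 + u * v) * ((1 - a * b) ^ 2 / ((1 - a) * (1 - b))) ^ (1 / p) := by gcongr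

theorem stmt_7 (p u v : ℝ) (hp : 1 ≤ p)
    (hu0 : 0 ≤ u) (hu1 : u < 1) (hv0 : 0 ≤ v) (hv1 : v < 1) :
    Dp p ((u + v) / 2) ((u + v) / 2) ≤ Dp p u v ∧
      (Dp p u v = Dp p ((u + v) / 2) ((u + v) / 2) → u = v) := by
  rcases eq_or_ne u v with rfl | huv
  · simp only [add_self_div_two, le_refl, implies_true, and_self]
  · have hlt := Dp_midpoint_lt hp hu0 hu1 hv0 hv1 huv
    exact ⟨hlt.le, fun heq => absurd heq hlt.ne'⟩
end

section
/- Define d_p(x) = (1+x^p)^{2/p}/(1+x²) for x ∈ [0,1] and real p ≥ 1. If 1 ≤ p < 2 then d_p is strictly increasing on (0,1); if p = 2 then d_p(x) = 1 for all x; if p > 2 then d_p is strictly decreasing on (0,1). -/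
/-! On `(0, 1)` the logarithm of `d_p` has derivative
`2 (x^(p-1) - x) / ((1 + x^p)(1 + x^2))`, whose sign is that of `2 - p` because `0 < x < 1`.
For `p = 2` the numerator and denominator of `d_p` coincide. -/

noncomputable def dp (p x : ℝ) : ℝ := (1 + x ^ p) ^ (2 / p) / (1 + x ^ 2)

open Real Set

noncomputable def logDp (p x : ℝ) : ℝ := 2 / p * log (1 + x ^ p) - log (1 + x ^ 2)

section

variable {p x : ℝ}

lemma dp_eq_exp_logDp (hx : 0 < x) : dp p x = exp (logDp p x) := by
  have hxp : 0 < 1 + x ^ p := by positivity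
  rw [dp, logDp, exp_sub, exp_log (by positivity), rpow_def_of_pos hxp, mul_comm]

lemma hasDerivAt_logDp (hp : p ≠ 0) (hx : 0 < x) :
    HasDerivAt (logDp p) (2 * (x ^ (p - 1) - x) / ((1 + x ^ p) * (1 + x ^ 2))) x := by
  have hxp : 0 < 1 + x ^ p := by positivity
  have hx2 : 0 < 1 + x ^ 2 := by positivity
  have hnum : HasDerivAt (fun y ↦ 1 + y ^ p) (p * x ^ (p - 1)) x :=
    (hasDerivAt_rpow_const (Or.inl hx.ne')).const_add 1
  have hden : HasDerivAt (fun y : ℝ ↦ 1 + y ^ 2) (2 * x) x := by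
    simpa using ((hasDerivAt_pow 2 x).const_add 1)
  refine (((hnum.log hxp.ne').const_mul (2 / p)).sub (hden.log hx2.ne')).congr_deriv ?_
  have hpow : x ^ (p - 1) * x = x ^ p := by rw [← rpow_add_one hx.ne', sub_add_cancel]
  field_simp
  linear_combination x * hpow

lemma continuousOn_logDp (hp : p ≠ 0) : ContinuousOn (logDp p) (Ioi 0) :=
  fun _ hx ↦ (hasDerivAt_logDp hp hx).continuousAt.continuousWithinAt

lemma strictMonoOn_dp_of_lt_two (hp : 0 < p) (hp2 : p < 2) : StrictMonoOn (dp p) (Ioo 0 1) := by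
  have hlog : StrictMonoOn (logDp p) (Ioo 0 1) := by
    refine strictMonoOn_of_hasDerivWithinAt_pos (convex_Ioo 0 1)
      ((continuousOn_logDp hp.ne').mono Ioo_subset_Ioi_self)
      (fun x hx ↦ (hasDerivAt_logDp hp.ne' (interior_subset hx).1).hasDerivWithinAt) ?_
    intro x hx
    rw [interior_Ioo] at hx
    obtain ⟨hx0, hx1⟩ := hx
    have : x ^ (1 : ℝ) < x ^ (p - 1) := rpow_lt_rpow_of_exponent_gt hx0 hx1 (by linarith)
    rw [rpow_one] at this
    exact div_pos (by linarith) (by positivity)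
  intro x hx y hy hxy
  rw [dp_eq_exp_logDp hx.1, dp_eq_exp_logDp hy.1]
  exact exp_lt_exp.2 (hlog hx hy hxy)

lemma strictAntiOn_dp_of_two_lt (hp2 : 2 < p) : StrictAntiOn (dp p) (Ioo 0 1) := by
  have hp : p ≠ 0 := by positivity
  have hlog : StrictAntiOn (logDp p) (Ioo 0 1) := by
    refine strictAntiOn_of_hasDerivWithinAt_neg (convex_Ioo 0 1)
      ((continuousOn_logDp hp).mono Ioo_subset_Ioi_self)
      (fun x hx ↦ (hasDerivAt_logDp hp (interior_subset hx).1).hasDerivWithinAt) ?_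
    intro x hx
    rw [interior_Ioo] at hx
    obtain ⟨hx0, hx1⟩ := hx
    have : x ^ (p - 1) < x ^ (1 : ℝ) := rpow_lt_rpow_of_exponent_gt hx0 hx1 (by linarith)
    rw [rpow_one] at this
    exact div_neg_of_neg_of_pos (by linarith) (by positivity)
  intro x hx y hy hxy
  rw [dp_eq_exp_logDp hx.1, dp_eq_exp_logDp hy.1]
  exact exp_lt_exp.2 (hlog hx hy hxy)

end

lemma dp_two (x : ℝ) : dp 2 x = 1 := by
  rw [dp, rpow_two, div_self two_ne_zero, rpow_one, div_self (by positivity)]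

theorem stmt_10 (p : ℝ) (hp : 1 ≤ p) :
    ((p < 2) → StrictMonoOn (dp p) (Set.Ioo 0 1)) ∧
    (p = 2 → ∀ x ∈ Set.Icc (0 : ℝ) 1, dp p x = 1) ∧
    ((2 < p) → StrictAntiOn (dp p) (Set.Ioo 0 1)) := by
  refine ⟨strictMonoOn_dp_of_lt_two (by linarith), ?_, strictAntiOn_dp_of_two_lt⟩
  rintro rfl x -
  exact dp_two x
end

section
/- For 1 ≤ p < 2, the minimum of D_p(u,v) := (1/(1+uv))·((1−u^p v^p)²/((1−u^p)(1−v^p)))^{1/p} over u, v ∈ [0,1) is 1, attained at u = v = 0. -/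
theorem sq_one_add_mul_le_div {x y : ℝ} (hx : x ^ 2 < 1) (hy : y ^ 2 < 1) :
    (1 + x * y) ^ 2 ≤ (1 - x ^ 2 * y ^ 2) ^ 2 / ((1 - x ^ 2) * (1 - y ^ 2)) := by
  have hden : 0 < (1 - x ^ 2) * (1 - y ^ 2) := mul_pos (by linarith) (by linarith)
  rw [le_div_iff₀ hden]
  have hfactor : (1 - x ^ 2) * (1 - y ^ 2) ≤ (1 - x * y) ^ 2 := by nlinarith [sq_nonneg (x - y)]
  calc (1 + x * y) ^ 2 * ((1 - x ^ 2) * (1 - y ^ 2))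
      ≤ (1 + x * y) ^ 2 * (1 - x * y) ^ 2 := by gcongr
    _ = (1 - x ^ 2 * y ^ 2) ^ 2 := by ring

theorem one_add_le_rpow_one_add_rpow {t q : ℝ} (ht0 : 0 ≤ t) (ht1 : t ≤ 1) (hq0 : 0 < q)
    (hq1 : q ≤ 1) : 1 + t ≤ (1 + t ^ q) ^ q⁻¹ :=
  calc 1 + t ≤ 1 + t ^ q := by gcongr; exact Real.self_le_rpow_of_le_one ht0 ht1 hq1
    _ ≤ (1 + t ^ q) ^ q⁻¹ :=
      Real.self_le_rpow_of_one_le (by simp [Real.rpow_nonneg ht0]) (one_le_inv₀ hq0 |>.2 hq1)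

theorem one_add_mul_le_rpow_div {p u v : ℝ} (hp0 : 0 < p) (hp2 : p ≤ 2) (hu0 : 0 ≤ u)
    (hu1 : u < 1) (hv0 : 0 ≤ v) (hv1 : v < 1) :
    1 + u * v ≤ ((1 - u ^ p * v ^ p) ^ 2 / ((1 - u ^ p) * (1 - v ^ p))) ^ (1 / p) := by
  have sq_rpow_half {w : ℝ} (hw : 0 ≤ w) : (w ^ (p / 2)) ^ 2 = w ^ p := by
    rw [← Real.rpow_natCast, ← Real.rpow_mul hw]; norm_num
  have hxy : u ^ (p / 2) * v ^ (p / 2) = (u * v) ^ (p / 2) := (Real.mul_rpow hu0 hv0).symm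
  rw [← sq_rpow_half hu0, ← sq_rpow_half hv0]
  calc 1 + u * v ≤ (1 + u ^ (p / 2) * v ^ (p / 2)) ^ (p / 2)⁻¹ := by
        rw [hxy]
        exact one_add_le_rpow_one_add_rpow (by positivity)
          (mul_le_one₀ hu1.le hv0 hv1.le) (by positivity) (by linarith)
    _ = ((1 + u ^ (p / 2) * v ^ (p / 2)) ^ 2) ^ (1 / p) := by
        rw [← Real.rpow_natCast, ← Real.rpow_mul (by positivity)]
        congr 1
        field_simp
        norm_num
    _ ≤ _ := by
        gcongr
        exact sq_one_add_mul_le_div (sq_rpow_half hu0 ▸ Real.rpow_lt_one hu0 hu1 hp0)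
          (sq_rpow_half hv0 ▸ Real.rpow_lt_one hv0 hv1 hp0)

theorem stmt_11 (p : ℝ) (hp1 : 1 ≤ p) (hp2 : p < 2) :
    (∀ u v : ℝ, 0 ≤ u → u < 1 → 0 ≤ v → v < 1 → 1 ≤ Dp p u v) ∧
      Dp p 0 0 = 1 := by
  have hp0 : 0 < p := one_pos.trans_le hp1
  refine ⟨fun u v hu0 hu1 hv0 hv1 => ?_, by simp [Dp, Real.zero_rpow hp0.ne']⟩
  rw [Dp, one_div_mul_eq_div, le_div_iff₀ (by positivity), one_mul]
  exact one_add_mul_le_rpow_div hp0 hp2.le hu0 hu1 hv0 hv1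
end

section
/- Let L ⊂ ℝ² be a lattice of determinant 1 containing points P = (x,y) and P' = (x',y') that both lie on the boundary of a convex symmetric open set B_t (a stretched ball of a norm F satisfying F(x,y)=F(|x|,|y|)), are linearly independent over ℝ, and suppose L ∩ B_t = {0}. If L = L_α := (1,−α)ℤ + (0,1)ℤ with α irrational, then {P, P'} is a ℤ-basis for L. -/
/-!
Write `P = κ u`, `P' = κ u'` with `κ (q, p) = (q, p - α q)` and `u, u' ∈ ℤ²`; the index of
`ℤP + ℤP'` in `L_α` is `|D|` with `D = det (u, u')`. If `|D| ≥ 2`, some nonzero lattice point is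
`rP/D + r'P'/D` with `2|r|, 2|r'| ≤ |D|`, and admissibility forces `2|r| = 2|r'| = |D|`; hence
`(P ± P')/2 ∈ L_α` and `F_t ≥ 1` there. Then `F_t(lP + mP') = |l| + |m|`: the closed unit ball
of `F_t` is the parallelogram with vertices `±P, ±P'`. The reflection `(x, y) ↦ (x, -y)`
preserves it, so permutes its vertices up to sign, which gives `|p - αq| = |p' - αq'|`.
For irrational `α` this means `P = ±P'`, contradicting `D ≠ 0`.
-/

section Wedge

variable {R : Type*} [CommRing R]

def wedge (u v : R × R) : R := u.1 * v.2 - u.2 * v.1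

theorem wedge_smul (u v w : R × R) : wedge u v • w = wedge w v • u + wedge u w • v := by
  ext <;>
    simp only [wedge, Prod.smul_fst, Prod.smul_snd, Prod.fst_add, Prod.snd_add, smul_eq_mul] <;>
    ring

variable [NoZeroDivisors R]

theorem eq_zero_of_smul_add_smul_eq_zero {u v : R × R} (huv : wedge u v ≠ 0) {a b : R}
    (h : a • u + b • v = 0) : a = 0 ∧ b = 0 := by
  have ha : a * wedge u v = wedge (a • u + b • v) v := by
    simp only [wedge, Prod.smul_fst, Prod.smul_snd, Prod.fst_add, Prod.snd_add, smul_eq_mul]; ring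
  have hb : b * wedge u v = wedge u (a • u + b • v) := by
    simp only [wedge, Prod.smul_fst, Prod.smul_snd, Prod.fst_add, Prod.snd_add, smul_eq_mul]; ring
  simp only [h, wedge, Prod.fst_zero, Prod.snd_zero, mul_zero, zero_mul, sub_zero] at ha hb
  exact ⟨(mul_eq_zero.mp ha).resolve_right huv, (mul_eq_zero.mp hb).resolve_right huv⟩

end Wedge

theorem Int.exists_dvd_sub_two_mul_abs_le (x : ℤ) {d : ℤ} (hd : d ≠ 0) :
    ∃ r, d ∣ x - r ∧ 2 * |r| ≤ |d| := by
  refine ⟨x.bmod d.natAbs, ?_, ?_⟩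
  · have h := Int.bmod_add_bdiv x d.natAbs
    rw [show x - x.bmod d.natAbs = d.natAbs * x.bdiv d.natAbs by omega]
    exact (Int.dvd_natAbs.mpr dvd_rfl).mul_right _
  · have h1 := @Int.bmod_le x d.natAbs (by omega)
    have h2 := @Int.le_bmod x d.natAbs (by omega)
    simp only [← Int.natCast_natAbs]
    omega

theorem exists_not_dvd_wedge {u u' : ℤ × ℤ} (hD : wedge u u' ≠ 0) (hD1 : ¬IsUnit (wedge u u')) :
    ∃ w : ℤ × ℤ, ¬(wedge u u' ∣ wedge w u' ∧ wedge u u' ∣ wedge u w) := by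
  by_contra! h
  obtain ⟨h1, h2⟩ := h (1, 0)
  obtain ⟨h3, h4⟩ := h (0, 1)
  simp only [wedge, one_mul, zero_mul, sub_zero, zero_sub, mul_one, mul_zero, dvd_neg]
    at h1 h2 h3 h4
  -- `wedge u u'` divides every coordinate of `u` and `u'`, hence divides its own square.
  refine hD1 (isUnit_of_dvd_one ((mul_dvd_mul_iff_left hD).mp ?_))
  rw [mul_one]
  nth_rewrite 3 [wedge]
  exact dvd_sub (mul_dvd_mul h4 h1) (mul_dvd_mul h2 h3)

theorem exists_ne_zero_wedge_smul_eq {u u' : ℤ × ℤ} (hD : wedge u u' ≠ 0)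
    (hD1 : ¬IsUnit (wedge u u')) :
    ∃ v ≠ 0, ∃ r r' : ℤ, wedge u u' • v = r • u + r' • u' ∧
      2 * |r| ≤ |wedge u u'| ∧ 2 * |r'| ≤ |wedge u u'| := by
  obtain ⟨w, hw⟩ := exists_not_dvd_wedge hD hD1
  obtain ⟨r, ⟨k, hk⟩, hr⟩ := (wedge w u').exists_dvd_sub_two_mul_abs_le hD
  obtain ⟨r', ⟨k', hk'⟩, hr'⟩ := (wedge u w).exists_dvd_sub_two_mul_abs_le hD
  have hv : wedge u u' • (w - k • u - k' • u') = r • u + r' • u' := by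
    linear_combination (norm := module) wedge_smul u u' w + hk • u + hk' • u'
  refine ⟨w - k • u - k' • u', fun h0 => hw ?_, r, r', hv, hr, hr'⟩
  rw [h0, smul_zero] at hv
  obtain ⟨rfl, rfl⟩ := eq_zero_of_smul_add_smul_eq_zero hD hv.symm
  exact ⟨⟨k, by simpa using hk⟩, ⟨k', by simpa using hk'⟩⟩

theorem exists_eq_smul_add_smul_of_isUnit {u v : ℤ × ℤ} (h : IsUnit (wedge u v)) (w : ℤ × ℤ) :
    ∃ m n : ℤ, w = m • u + n • v := by
  obtain ⟨c, hc⟩ := h.exists_left_inv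
  exact ⟨c * wedge w v, c * wedge u w, by
    linear_combination (norm := module) c • wedge_smul u v w - hc • w⟩

namespace Seminorm

variable {E : Type*} [AddCommGroup E] [Module ℝ E] {p : Seminorm ℝ E}

theorem map_zsmul_eq_mul (p : Seminorm ℝ E) (k : ℤ) (x : E) : p (k • x) = |(k : ℝ)| * p x := by
  rw [← Int.cast_smul_eq_zsmul ℝ, map_smul_eq_mul, Real.norm_eq_abs]

theorem two_mul_abs_le_apply_smul_add_smul {a b : E} (ha : p a ≤ 1) (hb : p b ≤ 1)
    (hab : 2 ≤ p (a + b)) (l m c : ℝ) :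
    2 * |c| ≤ p (l • a + m • b) + |c - l| + |c - m| :=
  calc 2 * |c| ≤ |c| * p (a + b) := by nlinarith [abs_nonneg c]
    _ = p ((l • a + m • b) + ((c - l) • a + (c - m) • b)) := by
        rw [← Real.norm_eq_abs, ← map_smul_eq_mul]; congr 1; module
    _ ≤ p (l • a + m • b) + (p ((c - l) • a) + p ((c - m) • b)) := by
        grw [map_add_le_add p (l • a + m • b), map_add_le_add p ((c - l) • a)]
    _ ≤ p (l • a + m • b) + |c - l| + |c - m| := by
        rw [map_smul_eq_mul, map_smul_eq_mul, Real.norm_eq_abs, Real.norm_eq_abs]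
        nlinarith [abs_nonneg (c - l), abs_nonneg (c - m)]

theorem abs_add_abs_le_apply_smul_add_smul {a b : E} (ha : p a ≤ 1) (hb : p b ≤ 1)
    (hadd : 2 ≤ p (a + b)) (hsub : 2 ≤ p (a - b)) (l m : ℝ) :
    |l| + |m| ≤ p (l • a + m • b) := by
  have hb' : p (-b) ≤ 1 := by rwa [map_neg_eq_map]
  have hsub' : 2 ≤ p (a + -b) := by rwa [← sub_eq_add_neg]
  have h1 := two_mul_abs_le_apply_smul_add_smul ha hb hadd l m l
  have h2 := two_mul_abs_le_apply_smul_add_smul ha hb hadd l m m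
  have h3 := two_mul_abs_le_apply_smul_add_smul ha hb' hsub' l (-m) l
  have h4 := two_mul_abs_le_apply_smul_add_smul ha hb' hsub' l (-m) (-m)
  simp only [neg_smul_neg, sub_self, abs_zero, abs_neg, sub_neg_eq_add, add_zero] at h1 h2 h3 h4
  rw [abs_sub_comm] at h2
  rw [show -m - l = -(l + m) by ring, abs_neg] at h4
  cases abs_cases l <;> cases abs_cases m <;> cases abs_cases (l - m) <;>
    cases abs_cases (l + m) <;> linarith

variable {ι : ℤ × ℤ →+ E}

theorem exists_add_eq_two_zsmul (hadm : ∀ w, w ≠ 0 → 1 ≤ p (ι w)) {u u' : ℤ × ℤ}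
    (hu : p (ι u) ≤ 1) (hu' : p (ι u') ≤ 1) (hD : wedge u u' ≠ 0) (hD1 : ¬IsUnit (wedge u u')) :
    ∃ z, u + u' = (2 : ℤ) • z := by
  set D := wedge u u'
  obtain ⟨v, hv0, r, r', hv, hr, hr'⟩ := exists_ne_zero_wedge_smul_eq hD hD1
  have hcov : |(D : ℝ)| ≤ |(r : ℝ)| + |(r' : ℝ)| :=
    calc |(D : ℝ)| ≤ |(D : ℝ)| * p (ι v) := le_mul_of_one_le_right (abs_nonneg _) (hadm v hv0)
      _ = p (r • ι u + r' • ι u') := by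
          rw [← map_zsmul_eq_mul, ← map_zsmul, hv, map_add, map_zsmul, map_zsmul]
      _ ≤ |(r : ℝ)| * p (ι u) + |(r' : ℝ)| * p (ι u') := by
          grw [map_add_le_add, map_zsmul_eq_mul, map_zsmul_eq_mul]
      _ ≤ |(r : ℝ)| + |(r' : ℝ)| := by
          nlinarith [abs_nonneg (r : ℝ), abs_nonneg (r' : ℝ)]
  have hcov' : |D| ≤ |r| + |r'| := by exact_mod_cast hcov
  have hsign : ∀ s : ℤ, 2 * |s| = |D| → ∃ ε : ℤ, (ε = 1 ∨ ε = -1) ∧ 2 * s = ε * D := by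
    intro s hs
    rcases abs_eq_abs.mp (show |2 * s| = |D| by rw [abs_mul, abs_two, hs]) with h | h
    · exact ⟨1, .inl rfl, by rw [h, one_mul]⟩
    · exact ⟨-1, .inr rfl, by rw [h, neg_one_mul]⟩
  obtain ⟨ε, hε, hrε⟩ := hsign r (by linarith)
  obtain ⟨ε', hε', hrε'⟩ := hsign r' (by linarith)
  have h2v : (2 : ℤ) • v = ε • u + ε' • u' := by
    apply smul_right_injective (ℤ × ℤ) hD
    linear_combination (norm := module) (2 : ℤ) • hv + hrε • u + hrε' • u'
  rcases hε with rfl | rfl <;> rcases hε' with rfl | rfl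
  · exact ⟨v, by linear_combination (norm := module) -h2v⟩
  · exact ⟨v + u', by linear_combination (norm := module) -h2v⟩
  · exact ⟨u' - v, by linear_combination (norm := module) h2v⟩
  · exact ⟨-v, by linear_combination (norm := module) h2v⟩

theorem two_le_apply_add_and_sub (hadm : ∀ w, w ≠ 0 → 1 ≤ p (ι w)) {u u' : ℤ × ℤ}
    (hu : p (ι u) ≤ 1) (hu' : p (ι u') ≤ 1) (hD : wedge u u' ≠ 0) (hD1 : ¬IsUnit (wedge u u')) :
    2 ≤ p (ι (u + u')) ∧ 2 ≤ p (ι (u - u')) := by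
  obtain ⟨z, hz⟩ := exists_add_eq_two_zsmul hadm hu hu' hD hD1
  have two_le : ∀ y, y ≠ 0 → 2 ≤ p (ι ((2 : ℤ) • y)) := fun y hy => by
    rw [map_zsmul, map_zsmul_eq_mul]
    norm_num
    linarith [hadm y hy]
  have hz0 : z ≠ 0 := by
    rintro rfl
    have := eq_zero_of_smul_add_smul_eq_zero hD (a := 1) (b := 1) (by simpa using hz)
    simp at this
  have hz' : z - u' ≠ 0 := by
    intro h
    have := eq_zero_of_smul_add_smul_eq_zero hD (a := 1) (b := -1)
      (by linear_combination (norm := module) hz + (2 : ℤ) • h)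
    simp at this
  refine ⟨hz ▸ two_le z hz0, ?_⟩
  rw [show u - u' = (2 : ℤ) • (z - u') by linear_combination (norm := module) hz]
  exact two_le _ hz'

end Seminorm

theorem Seminorm.abs_wedge_add_abs_wedge_le {p : Seminorm ℝ (ℝ × ℝ)} {a b x : ℝ × ℝ} (ha : p a ≤ 1)
    (hb : p b ≤ 1) (hadd : 2 ≤ p (a + b)) (hsub : 2 ≤ p (a - b)) (hx : p x ≤ 1) :
    |wedge x b| + |wedge a x| ≤ |wedge a b| :=
  calc |wedge x b| + |wedge a x| ≤ p (wedge x b • a + wedge a x • b) :=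
        abs_add_abs_le_apply_smul_add_smul ha hb hadd hsub _ _
    _ = |wedge a b| * p x := by rw [← wedge_smul, map_smul_eq_mul, Real.norm_eq_abs]
    _ ≤ |wedge a b| := mul_le_of_le_one_right (abs_nonneg _) hx

theorem Seminorm.abs_snd_eq_abs_snd {p : Seminorm ℝ (ℝ × ℝ)} (hσ : ∀ x y, p (x, -y) = p (x, y))
    {a b : ℝ × ℝ} (ha : p a ≤ 1) (hb : p b ≤ 1) (hadd : 2 ≤ p (a + b)) (hsub : 2 ≤ p (a - b))
    (hab : wedge a b ≠ 0) (ha₂ : a.2 ≠ 0) (hb₂ : b.2 ≠ 0) : |a.2| = |b.2| := by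
  have h₁ := abs_wedge_add_abs_wedge_le ha hb hadd hsub (x := (a.1, -a.2)) (by rwa [hσ])
  have h₂ := abs_wedge_add_abs_wedge_le ha hb hadd hsub (x := (b.1, -b.2)) (by rwa [hσ])
  obtain ⟨a₁, a₂⟩ := a
  obtain ⟨b₁, b₂⟩ := b
  simp only [wedge] at h₁ h₂ hab ha₂ hb₂ ⊢
  set s := a₁ * b₂ + a₂ * b₁
  rw [show a₁ * b₂ - -a₂ * b₁ = s by ring, show a₁ * -a₂ - a₂ * a₁ = -(2 * (a₁ * a₂)) by ring,
    abs_neg, abs_mul, abs_mul, abs_two] at h₁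
  rw [show b₁ * b₂ - -b₂ * b₁ = 2 * (b₁ * b₂) by ring, show a₁ * -b₂ - a₂ * b₁ = -s by ring,
    abs_neg, abs_mul, abs_mul, abs_two] at h₂
  have tri₁ : |a₁ * b₂ - a₂ * b₁| ≤ 2 * (|a₁| * |b₂|) + |s| := by
    have := abs_sub (2 * (a₁ * b₂)) s
    rwa [abs_mul, abs_mul, abs_two, show 2 * (a₁ * b₂) - s = a₁ * b₂ - a₂ * b₁ by ring] at this
  have tri₂ : |a₁ * b₂ - a₂ * b₁| ≤ |s| + 2 * (|a₂| * |b₁|) := by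
    have := abs_sub s (2 * (a₂ * b₁))
    rwa [abs_mul, abs_mul, abs_two, show s - 2 * (a₂ * b₁) = a₁ * b₂ - a₂ * b₁ by ring] at this
  have ha₁b₁ : |a₁| = |b₁| := le_antisymm
    (le_of_mul_le_mul_right (a := |a₂|) (by linarith) (abs_pos.2 ha₂))
    (le_of_mul_le_mul_right (a := |b₂|) (by linarith) (abs_pos.2 hb₂))
  have ha₁ : a₁ ≠ 0 := by
    rintro rfl
    rw [abs_zero, eq_comm, abs_eq_zero] at ha₁b₁
    exact hab (by rw [ha₁b₁]; ring)
  exact le_antisymm (le_of_mul_le_mul_left (a := |a₁|) (by linarith) (abs_pos.2 ha₁))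
    (le_of_mul_le_mul_left (a := |a₁|) (by rw [ha₁b₁]; linarith) (abs_pos.2 ha₁))

def latticeEmbedding (α : ℝ) : ℤ × ℤ →+ ℝ × ℝ where
  toFun w := (w.1, w.2 - α * w.1)
  map_zero' := by simp
  map_add' v w := by
    ext
    · simp
    · simp only [Prod.snd_add, Prod.fst_add, Int.cast_add]
      ring

theorem range_latticeEmbedding (α : ℝ) :
    Set.range (latticeEmbedding α) = {v : ℝ × ℝ | ∃ p q : ℤ, v = ((q : ℝ), (p : ℝ) - α * q)} := by
  ext v
  exact ⟨fun ⟨w, hw⟩ => ⟨w.2, w.1, hw.symm⟩, fun ⟨p, q, hv⟩ => ⟨(q, p), hv.symm⟩⟩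

theorem wedge_latticeEmbedding (α : ℝ) (u v : ℤ × ℤ) :
    wedge (latticeEmbedding α u) (latticeEmbedding α v) = wedge u v := by
  simp only [wedge, latticeEmbedding, AddMonoidHom.coe_mk, ZeroHom.coe_mk]
  push_cast
  ring

theorem latticeEmbedding_injective (α : ℝ) : Function.Injective (latticeEmbedding α) := by
  rintro ⟨q, p⟩ ⟨q', p'⟩ h
  simp only [latticeEmbedding, AddMonoidHom.coe_mk, ZeroHom.coe_mk, Prod.mk.injEq] at h
  obtain ⟨hq, hp⟩ := h
  rw [hq] at hp
  exact Prod.ext (by exact_mod_cast hq) (by exact_mod_cast sub_left_injective hp)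

theorem Irrational.latticeEmbedding_snd_injective {α : ℝ} (hα : Irrational α) :
    Function.Injective fun w => (latticeEmbedding α w).2 := by
  rintro ⟨q, p⟩ ⟨q', p'⟩ h
  simp only [latticeEmbedding, AddMonoidHom.coe_mk, ZeroHom.coe_mk] at h
  obtain rfl : q = q' := by
    by_contra hne
    exact (hα.mul_intCast (sub_ne_zero.mpr hne)).ne_int (p - p') (by push_cast; linarith)
  exact Prod.ext rfl (by exact_mod_cast (by linarith : (p : ℝ) = p'))

theorem Irrational.latticeEmbedding_snd_ne_zero {α : ℝ} (hα : Irrational α) {u : ℤ × ℤ}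
    (hu : u ≠ 0) : (latticeEmbedding α u).2 ≠ 0 :=
  fun h => hu (hα.latticeEmbedding_snd_injective (h.trans (by simp)))

theorem Irrational.wedge_eq_zero_of_abs_snd_eq {α : ℝ} (hα : Irrational α) {u v : ℤ × ℤ}
    (h : |(latticeEmbedding α u).2| = |(latticeEmbedding α v).2|) : wedge u v = 0 := by
  rcases abs_eq_abs.mp h with h | h
  · rw [hα.latticeEmbedding_snd_injective h, wedge]
    ring
  · rw [hα.latticeEmbedding_snd_injective (h.trans (by simp) : _ = (latticeEmbedding α (-v)).2),
      wedge, Prod.fst_neg, Prod.snd_neg]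
    ring

noncomputable def stretch (t : ℝ) : ℝ × ℝ →ₗ[ℝ] ℝ × ℝ where
  toFun v := (v.1 / t, t * v.2)
  map_add' v w := by ext <;> simp only [Prod.fst_add, Prod.snd_add] <;> ring
  map_smul' c v := by
    ext <;> simp only [Prod.smul_fst, Prod.smul_snd, smul_eq_mul, RingHom.id_apply] <;> ring

theorem stmt_13_general (F : ℝ × ℝ → ℝ)
    (hhom : ∀ (t : ℝ) (P), F (t • P) = |t| * F P)
    (htri : ∀ P Q, F (P + Q) ≤ F P + F Q)
    (hsym : ∀ x y : ℝ, F (x, y) = F (|x|, |y|))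
    (t : ℝ)
    (α : ℝ) (hα : Irrational α)
    (L : Set (ℝ × ℝ))
    (hL : L = {v : ℝ × ℝ | ∃ p q : ℤ, v = ((q : ℝ), (p : ℝ) - α * q)})
    (P P' : ℝ × ℝ)
    (hP : P ∈ L) (hP' : P' ∈ L)
    (hPbd : F (P.1 / t, t * P.2) = 1)
    (hP'bd : F (P'.1 / t, t * P'.2) = 1)
    (hindep : P.1 * P'.2 - P.2 * P'.1 ≠ 0)
    (hadm : ∀ v ∈ L, F (v.1 / t, t * v.2) < 1 → v = 0) :
    ∀ v ∈ L, ∃ m n : ℤ, v = m • P + n • P' := by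
  rw [← range_latticeEmbedding] at hL
  subst hL
  set κ := latticeEmbedding α
  obtain ⟨u, rfl⟩ := hP
  obtain ⟨u', rfl⟩ := hP'
  let G : Seminorm ℝ (ℝ × ℝ) :=
    (Seminorm.of F htri fun a x => by rw [hhom, Real.norm_eq_abs]).comp (stretch t)
  have hGσ : ∀ x y, G (x, -y) = G (x, y) := fun x y => by
    change F (x / t, t * -y) = F (x / t, t * y)
    rw [hsym, mul_neg, abs_neg, ← hsym]
  have hGadm : ∀ w, w ≠ 0 → 1 ≤ G (κ w) := fun w hw =>
    not_lt.mp fun h => hw (latticeEmbedding_injective α (by simpa using hadm _ ⟨w, rfl⟩ h))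
  have hD : wedge u u' ≠ 0 := by
    have : ((wedge u u' : ℤ) : ℝ) ≠ 0 := by rw [← wedge_latticeEmbedding α]; exact hindep
    exact_mod_cast this
  have hu : u ≠ 0 := by rintro rfl; simp [wedge] at hD
  have hu' : u' ≠ 0 := by rintro rfl; simp [wedge] at hD
  have hbasis : IsUnit (wedge u u') := by
    by_contra hD1
    obtain ⟨hadd, hsub⟩ := Seminorm.two_le_apply_add_and_sub hGadm hPbd.le hP'bd.le hD hD1
    rw [map_add] at hadd
    rw [map_sub] at hsub
    exact hD (hα.wedge_eq_zero_of_abs_snd_eq (Seminorm.abs_snd_eq_abs_snd hGσ hPbd.le hP'bd.le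
      hadd hsub hindep (hα.latticeEmbedding_snd_ne_zero hu) (hα.latticeEmbedding_snd_ne_zero hu')))
  rintro _ ⟨w, rfl⟩
  obtain ⟨m, n, rfl⟩ := exists_eq_smul_add_smul_of_isUnit hbasis w
  exact ⟨m, n, by rw [map_add, map_zsmul, map_zsmul]⟩

theorem stmt_13 (F : ℝ × ℝ → ℝ)
    (hnonneg : ∀ P, 0 ≤ F P)
    (hzero : ∀ P, F P = 0 ↔ P = 0)
    (hhom : ∀ (t : ℝ) (P), F (t • P) = |t| * F P)
    (htri : ∀ P Q, F (P + Q) ≤ F P + F Q)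
    (hsym : ∀ x y : ℝ, F (x, y) = F (|x|, |y|))
    (t : ℝ) (ht : 0 < t)
    (α : ℝ) (hα : Irrational α)
    (L : Set (ℝ × ℝ))
    (hL : L = {v : ℝ × ℝ | ∃ p q : ℤ, v = ((q : ℝ), (p : ℝ) - α * q)})
    (P P' : ℝ × ℝ)
    (hP : P ∈ L) (hP' : P' ∈ L)
    (hPbd : F (P.1 / t, t * P.2) = 1)
    (hP'bd : F (P'.1 / t, t * P'.2) = 1)
    (hindep : P.1 * P'.2 - P.2 * P'.1 ≠ 0)
    (hadm : ∀ v ∈ L, F (v.1 / t, t * v.2) < 1 → v = 0) :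
    ∀ v ∈ L, ∃ m n : ℤ, v = m • P + n • P' :=
  stmt_13_general F hhom htri hsym t α hα L hL P P' hP hP' hPbd hP'bd hindep hadm
end

section
/- Suppose (u,v) ∈ [1/2, 1) × [0,1] satisfies the system: there exist reals x > x' ≥ 0 and y, y' with y' > |y|, xy' − yx' = 1, |x|+|y| = |x'|+|y'|, and |x+x'|+|y+y'| ≤ |x|+|y|. Then v ≤ 2 − 1/u. -/
/-! Writing `a = -y > 0`, the equality of 1-norms gives `x' = x + a - y'` and the inequality
`‖P + P'‖₁ ≤ ‖P‖₁` gives `x ≤ a`; then `2 - 1/u - v = (a - x)(y' - a)/(a x) ≥ 0` because `a = |y| < y'`. -/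

lemma le_neg_of_abs_add_abs_add_le {x y x' y' : ℝ} (hx : 0 ≤ x) (hy : y ≤ 0)
    (hx' : 0 ≤ x') (hy' : 0 ≤ y')
    (hnorm : |x| + |y| = |x'| + |y'|) (hsum : |x + x'| + |y + y'| ≤ |x| + |y|) :
    x ≤ -y := by
  rw [abs_of_nonneg hx, abs_of_nonpos hy, abs_of_nonneg hx', abs_of_nonneg hy'] at hnorm
  rw [abs_of_nonneg hx, abs_of_nonpos hy] at hsum
  linarith [le_abs_self (x + x'), le_abs_self (y + y')]

lemma div_le_two_sub_div_of_add_eq {x x' a b : ℝ} (hx : 0 < x) (hxa : x ≤ a) (hab : a ≤ b)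
    (hsum : x' + b = x + a) : x' / x ≤ 2 - b / a := by
  have ha : 0 < a := hx.trans_le hxa
  have key : 2 - b / a - x' / x = (a - x) * (b - a) / (a * x) := by
    rw [show x' = x + a - b by linarith]
    field_simp
    ring
  have : 0 ≤ (a - x) * (b - a) / (a * x) :=
    div_nonneg (mul_nonneg (sub_nonneg.mpr hxa) (sub_nonneg.mpr hab)) (mul_pos ha hx).le
  linarith

theorem stmt_14_general (u v x y x' y' : ℝ)
    (hu1 : 1 / 2 ≤ u)
    (hx' : 0 ≤ x') (hxx : x' < x)
    (hyy : |y| < y')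
    (hnorm : |x| + |y| = |x'| + |y'|)
    (hsum : |x + x'| + |y + y'| ≤ |x| + |y|)
    (hu : u = -y / y') (hv : v = x' / x) :
    v ≤ 2 - 1 / u := by
  have hy' : 0 < y' := (abs_nonneg y).trans_lt hyy
  have hx : 0 < x := hx'.trans_lt hxx
  have hy : y < 0 :=
    neg_pos.mp ((div_pos_iff_of_pos_right hy').mp (by rw [← hu]; linarith))
  have hxy : x ≤ -y := le_neg_of_abs_add_abs_add_le hx.le hy.le hx' hy'.le hnorm hsum
  rw [abs_of_pos hx, abs_of_neg hy, abs_of_nonneg hx', abs_of_pos hy'] at hnorm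
  rw [hv, hu, one_div_div]
  exact div_le_two_sub_div_of_add_eq hx hxy ((neg_le_abs y).trans hyy.le) (by linarith)

theorem stmt_14 (u v x y x' y' : ℝ)
    (hu1 : 1 / 2 ≤ u) (hu2 : u < 1) (hv1 : 0 ≤ v) (hv2 : v ≤ 1)
    (hx' : 0 ≤ x') (hxx : x' < x)
    (hyy : |y| < y')
    (hdet : x * y' - y * x' = 1)
    (hnorm : |x| + |y| = |x'| + |y'|)
    (hsum : |x + x'| + |y + y'| ≤ |x| + |y|)
    (hu : u = -y / y') (hv : v = x' / x) :
    v ≤ 2 - 1 / u :=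
  stmt_14_general u v x y x' y' hu1 hx' hxx hyy hnorm hsum hu hv
end

section
/- Let 1 ≤ p < ∞ and u ∈ (−1,1), v ∈ [0,1). Set t = ((1−v^p)/(1−|u|^p))^{1/(2p)}. Then the p-norm of the vector (t⁻¹, −u·t)/√(1+uv) equals the p-norm of (t⁻¹·v, t)/√(1+uv), and the square of this common norm equals (1/(1+uv))·((1−|u|^p v^p)²/((1−|u|^p)(1−v^p)))^{1/p}. -/
noncomputable def pnorm (p x y : ℝ) : ℝ := (|x| ^ p + |y| ^ p) ^ (1 / p)

/-! With `a = |u|^p`, `b = v^p` and `τ = t^p = √((1-b)/(1-a))`, the `p`-th powers of the two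
row norms are `τ⁻¹ + aτ` and `bτ⁻¹ + τ`. Over the common denominator `√((1-a)(1-b))` both become
`1 - ab`, since `(1-a) + a(1-b) = b(1-a) + (1-b)`. Squaring the common norm gives the formula. -/

open Real

lemma pnorm_div (p x y : ℝ) {s : ℝ} (hp : p ≠ 0) (hs : 0 ≤ s) :
    pnorm p (x / s) (y / s) = pnorm p x y / s := by
  unfold pnorm
  rw [abs_div, abs_div, abs_of_nonneg hs, div_rpow (abs_nonneg x) hs, div_rpow (abs_nonneg y) hs,
    ← add_div, div_rpow (by positivity) (by positivity), one_div, rpow_rpow_inv hs hp]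

lemma pnorm_inv_neg_mul (p u : ℝ) {t : ℝ} (ht : 0 ≤ t) :
    pnorm p t⁻¹ (-u * t) = ((t ^ p)⁻¹ + |u| ^ p * t ^ p) ^ (1 / p) := by
  rw [pnorm, neg_mul, abs_neg, abs_mul, abs_of_nonneg (inv_nonneg.2 ht), abs_of_nonneg ht,
    inv_rpow ht, mul_rpow (abs_nonneg u) ht]

lemma pnorm_inv_mul (p : ℝ) {v t : ℝ} (hv : 0 ≤ v) (ht : 0 ≤ t) :
    pnorm p (t⁻¹ * v) t = (v ^ p * (t ^ p)⁻¹ + t ^ p) ^ (1 / p) := by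
  rw [pnorm, abs_mul, abs_of_nonneg (inv_nonneg.2 ht), abs_of_nonneg hv, abs_of_nonneg ht,
    mul_rpow (inv_nonneg.2 ht) hv, inv_rpow ht, mul_comm]

lemma inv_sqrt_div_add_mul_sqrt_div {a b : ℝ} (ha : a < 1) (hb : b < 1) :
    (√((1 - b) / (1 - a)))⁻¹ + a * √((1 - b) / (1 - a)) = (1 - a * b) / √((1 - a) * (1 - b)) := by
  have ha' : 0 < 1 - a := by linarith
  have hb' : 0 < 1 - b := by linarith
  have hα := sq_sqrt ha'.le
  have hβ := sq_sqrt hb'.le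
  have : 0 < √(1 - a) := sqrt_pos.2 ha'
  have : 0 < √(1 - b) := sqrt_pos.2 hb'
  rw [sqrt_div hb'.le, sqrt_mul ha'.le]
  field_simp
  linear_combination hα + a * hβ

lemma mul_inv_sqrt_div_add_sqrt_div {a b : ℝ} (ha : a < 1) (hb : b < 1) :
    b * (√((1 - b) / (1 - a)))⁻¹ + √((1 - b) / (1 - a)) = (1 - a * b) / √((1 - a) * (1 - b)) := by
  have h := inv_sqrt_div_add_mul_sqrt_div hb ha
  rw [← sqrt_inv, inv_div] at h
  rw [← sqrt_inv, inv_div, add_comm, h, mul_comm b a, mul_comm (1 - b)]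

lemma rpow_one_div_two_mul_rpow {q : ℝ} (hq : 0 ≤ q) {p : ℝ} (hp : p ≠ 0) :
    (q ^ (1 / (2 * p))) ^ p = √q := by
  rw [← rpow_mul hq, sqrt_eq_rpow]
  field_simp

theorem stmt_18 (p u v : ℝ) (hp : 1 ≤ p)
    (hu1 : -1 < u) (hu2 : u < 1) (hv1 : 0 ≤ v) (hv2 : v < 1) :
    let t : ℝ := ((1 - v ^ p) / (1 - |u| ^ p)) ^ (1 / (2 * p))
    let s : ℝ := Real.sqrt (1 + u * v)
    pnorm p (t⁻¹ / s) (-u * t / s) = pnorm p (t⁻¹ * v / s) (t / s) ∧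
      (pnorm p (t⁻¹ / s) (-u * t / s)) ^ 2 =
        (1 / (1 + u * v)) *
          ((1 - |u| ^ p * v ^ p) ^ 2 / ((1 - |u| ^ p) * (1 - v ^ p))) ^ (1 / p) := by
  intro t s
  have hp0 : 0 < p := by linarith
  have ha : |u| ^ p < 1 := rpow_lt_one (abs_nonneg u) (abs_lt.2 ⟨hu1, hu2⟩) hp0
  have hb : v ^ p < 1 := rpow_lt_one hv1 hv2 hp0
  have ht : 0 ≤ t := by positivity
  have htp : t ^ p = √((1 - v ^ p) / (1 - |u| ^ p)) :=
    rpow_one_div_two_mul_rpow (div_nonneg (by linarith) (by linarith)) hp0.ne'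
  set X := (1 - |u| ^ p * v ^ p) / √((1 - |u| ^ p) * (1 - v ^ p))
  have hrow1 : pnorm p t⁻¹ (-u * t) = X ^ (1 / p) := by
    rw [pnorm_inv_neg_mul p u ht, htp, inv_sqrt_div_add_mul_sqrt_div ha hb]
  have hrow2 : pnorm p (t⁻¹ * v) t = X ^ (1 / p) := by
    rw [pnorm_inv_mul p hv1 ht, htp, mul_inv_sqrt_div_add_sqrt_div ha hb]
  have hs : 0 ≤ s := sqrt_nonneg _
  have huv : 0 ≤ 1 + u * v := by nlinarith [abs_lt.2 ⟨hu1, hu2⟩, neg_abs_le u]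
  have hX : 0 ≤ X :=
    div_nonneg (by nlinarith [rpow_nonneg (abs_nonneg u) p, rpow_nonneg hv1 p]) (sqrt_nonneg _)
  have hX2 : X ^ 2 = (1 - |u| ^ p * v ^ p) ^ 2 / ((1 - |u| ^ p) * (1 - v ^ p)) := by
    rw [div_pow, sq_sqrt (mul_nonneg (by linarith) (by linarith))]
  refine ⟨by rw [pnorm_div _ _ _ hp0.ne' hs, pnorm_div _ _ _ hp0.ne' hs, hrow1, hrow2], ?_⟩
  rw [pnorm_div _ _ _ hp0.ne' hs, hrow1, div_pow, sq_sqrt huv, rpow_pow_comm hX, hX2,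
    one_div_mul_eq_div]
end

section
/- Suppose α is irrational and for every ε > 0 there are arbitrarily large integers q > 0 with |p/q − α| < ε/q² for some integer p. Let F be a norm on ℝ² with F(x,y)=F(|x|,|y|) and F(1,0)=F(0,1)=1. Then for any ε' > 0 there exist arbitrarily large t such that for all integers r and s > 0, F(s/t, t(sα − r)) ≥ 1 − ε'. -/
/-!
Take `t = q`, the reduced denominator of an approximation `p / q` with `|q α - p| < ε / q`;
irrationality of `α` forces these reduced denominators to be unbounded. The symmetric norm
dominates both `|x|` and `|y|`. For `s ≥ q` the first coordinate `s / q ≥ 1` suffices. For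
`0 < s < q`, coprimality makes `s p - r q` a nonzero integer, and
`q (s α - r) = s (q α - p) + (s p - r q)` with `|s (q α - p)| < ε`.
-/
theorem abs_fst_le_of_abs_symm {F : ℝ × ℝ → ℝ}
    (hhom : ∀ (t : ℝ) (P), F (t • P) = |t| * F P)
    (htri : ∀ P Q, F (P + Q) ≤ F P + F Q)
    (hsym : ∀ x y : ℝ, F (x, y) = F (|x|, |y|)) (hnorm : F (1, 0) = 1) (x y : ℝ) :
    |x| ≤ F (x, y) := by
  have hreflect : F (x, -y) = F (x, y) := by rw [hsym, abs_neg, ← hsym]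
  have hsplit : (2 * x) • ((1 : ℝ), (0 : ℝ)) = (x, y) + (x, -y) := by
    ext <;> simp [two_mul]
  have := htri (x, y) (x, -y)
  rw [← hsplit, hhom, hnorm, hreflect, abs_mul, abs_two] at this
  linarith

theorem abs_snd_le_of_abs_symm {F : ℝ × ℝ → ℝ}
    (hhom : ∀ (t : ℝ) (P), F (t • P) = |t| * F P)
    (htri : ∀ P Q, F (P + Q) ≤ F P + F Q)
    (hsym : ∀ x y : ℝ, F (x, y) = F (|x|, |y|)) (hnorm : F (0, 1) = 1) (x y : ℝ) :
    |y| ≤ F (x, y) :=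
  abs_fst_le_of_abs_symm (F := fun P => F P.swap) (fun t P => hhom t P.swap)
    (fun P Q => htri P.swap Q.swap) (fun x y => hsym y x) hnorm y x

theorem Irrational.exists_pos_le_abs_mul_sub_int {α : ℝ} (hα : Irrational α) (N : ℕ) :
    ∃ δ > 0, ∀ n : ℕ, 0 < n → n ≤ N → ∀ m : ℤ, δ ≤ |n * α - m| := by
  set dist : ℕ → ℝ := fun n => |n * α - round (n * α)|
  have hpos : ∀ n : ℕ, 0 < n → 0 < dist n := fun n hn =>
    abs_pos.mpr (sub_ne_zero.mpr ((hα.natCast_mul hn.ne').ne_int _))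
  rcases Nat.eq_zero_or_pos N with rfl | hN
  · exact ⟨1, one_pos, fun n hn hnN => by omega⟩
  have hne : (Finset.Icc 1 N).Nonempty := Finset.nonempty_Icc.mpr hN
  refine ⟨(Finset.Icc 1 N).inf' hne dist, ?_, fun n hn hnN m => ?_⟩
  · exact (Finset.lt_inf'_iff hne).mpr fun n hn => hpos n (Finset.mem_Icc.mp hn).1
  · exact (Finset.inf'_le dist (Finset.mem_Icc.mpr ⟨hn, hnN⟩)).trans (round_le _ m)

theorem Irrational.exists_rat_den_gt_abs_den_mul_sub_num_lt {α ε : ℝ} (hα : Irrational α)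
    (hwa : ∀ ε : ℝ, 0 < ε → ∀ Q : ℤ, ∃ q : ℤ, Q < q ∧ 0 < q ∧
      ∃ p : ℤ, |(p : ℝ) / q - α| < ε / (q : ℝ) ^ 2)
    (hε : 0 < ε) (N : ℕ) : ∃ x : ℚ, N < x.den ∧ |x.den * α - x.num| < ε / x.den := by
  obtain ⟨δ, hδ, hsep⟩ := hα.exists_pos_le_abs_mul_sub_int N
  obtain ⟨q, hqδ, hq, p, hpq⟩ := hwa ε hε ⌈ε / δ⌉
  set x : ℚ := p / q
  have hqR : (0 : ℝ) < q := by exact_mod_cast hq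
  have hden : (0 : ℝ) < x.den := by exact_mod_cast x.pos
  have hden_le : (x.den : ℝ) ≤ q := by
    have hdivInt : x = Rat.divInt p q := (Rat.divInt_eq_div p q).symm
    rw [hdivInt]
    exact_mod_cast Int.le_of_dvd hq (Rat.den_dvd p q)
  have hclose : |x.den * α - x.num| < ε / q :=
    calc |x.den * α - x.num| = x.den * |(x : ℝ) - α| := by
          have hnum : (x.num : ℝ) = x.den * x := by rw [Rat.cast_def]; field_simp
          rw [hnum, ← mul_sub, abs_mul, abs_of_pos hden, abs_sub_comm]
      _ < x.den * (ε / q ^ 2) := by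
          gcongr; simpa [x] using hpq
      _ ≤ q * (ε / q ^ 2) := by gcongr
      _ = ε / q := by field_simp
  refine ⟨x, ?_, hclose.trans_le (by gcongr)⟩
  by_contra! hle
  have hεq : ε / q < δ := by
    rw [div_lt_iff₀ hqR, ← div_lt_iff₀' hδ]
    exact (Int.le_ceil _).trans_lt (by exact_mod_cast hqδ)
  linarith [hsep x.den x.pos hle x.num]

theorem Rat.mul_num_sub_mul_den_ne_zero (x : ℚ) {s : ℤ} (hs : 0 < s) (hsd : s < x.den) (r : ℤ) :
    s * x.num - r * x.den ≠ 0 := by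
  intro h
  have hdvd : (x.den : ℤ) ∣ s * x.num := ⟨r, by linarith⟩
  have := Int.le_of_dvd hs (x.isCoprime_num_den.symm.dvd_of_dvd_mul_right hdvd)
  omega

theorem one_sub_le_abs_den_mul_sub {α ε : ℝ} {x : ℚ} (hx : |x.den * α - x.num| < ε / x.den)
    {s : ℤ} (hs : 0 < s) (hsd : s < x.den) (r : ℤ) : 1 - ε ≤ |x.den * (s * α - r)| := by
  have hden : (0 : ℝ) < x.den := by exact_mod_cast x.pos
  have hsmall : |s * (x.den * α - x.num)| < ε :=
    calc |s * (x.den * α - x.num)| = s * |x.den * α - x.num| := by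
          rw [abs_mul, abs_of_pos (by exact_mod_cast hs)]
      _ ≤ x.den * |x.den * α - x.num| := by gcongr; exact_mod_cast hsd.le
      _ < x.den * (ε / x.den) := by gcongr
      _ = ε := by field_simp
  have hint : (1 : ℝ) ≤ |((s * x.num - r * x.den : ℤ) : ℝ)| := by
    rw [← Int.cast_abs]; exact_mod_cast Int.one_le_abs (x.mul_num_sub_mul_den_ne_zero hs hsd r)
  have hsplit : x.den * (s * α - r) =
      ((s * x.num - r * x.den : ℤ) : ℝ) - -(s * (x.den * α - x.num)) := by
    push_cast; ring
  rw [hsplit]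
  linarith [abs_sub_abs_le_abs_sub ((s * x.num - r * x.den : ℤ) : ℝ) (-(s * (x.den * α - x.num))),
    abs_neg (s * (x.den * α - x.num))]

theorem one_sub_le_stretch {F : ℝ × ℝ → ℝ} (hfst : ∀ x y, |x| ≤ F (x, y))
    (hsnd : ∀ x y, |y| ≤ F (x, y)) {α ε : ℝ} {x : ℚ} (hx : |x.den * α - x.num| < ε / x.den)
    (r s : ℤ) (hs : 0 < s) : 1 - ε ≤ F (s / x.den, x.den * (s * α - r)) := by
  have hden : (0 : ℝ) < x.den := by exact_mod_cast x.pos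
  rcases lt_or_ge s x.den with hsd | hds
  · exact (one_sub_le_abs_den_mul_sub hx hs hsd r).trans (hsnd _ _)
  · have hε : 0 < ε := (div_pos_iff_of_pos_right hden).mp ((abs_nonneg _).trans_lt hx)
    have : (1 : ℝ) ≤ s / x.den := (one_le_div hden).mpr (by exact_mod_cast hds)
    linarith [le_abs_self ((s : ℝ) / x.den), hfst (s / x.den) (x.den * (s * α - r))]

theorem stmt_19_general (α : ℝ) (hα : Irrational α)
    (hwa : ∀ ε : ℝ, 0 < ε → ∀ Q : ℤ, ∃ q : ℤ, Q < q ∧ 0 < q ∧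
      ∃ p : ℤ, |(p : ℝ) / q - α| < ε / (q : ℝ) ^ 2)
    (F : ℝ × ℝ → ℝ)
    (hhom : ∀ (t : ℝ) (P), F (t • P) = |t| * F P)
    (htri : ∀ P Q, F (P + Q) ≤ F P + F Q)
    (hsym : ∀ x y : ℝ, F (x, y) = F (|x|, |y|))
    (hnorm1 : F (1, 0) = 1) (hnorm2 : F (0, 1) = 1) :
    ∀ ε' : ℝ, 0 < ε' → ∀ T : ℝ, ∃ t : ℝ, T < t ∧
      ∀ r s : ℤ, 0 < s →
        1 - ε' ≤ F ((s : ℝ) / t, t * ((s : ℝ) * α - (r : ℝ))) := by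
  intro ε' hε' T
  obtain ⟨x, hxT, hx⟩ := hα.exists_rat_den_gt_abs_den_mul_sub_num_lt hwa hε' ⌈T⌉₊
  refine ⟨x.den, (Nat.le_ceil T).trans_lt (by exact_mod_cast hxT), fun r s hs => ?_⟩
  exact one_sub_le_stretch (abs_fst_le_of_abs_symm hhom htri hsym hnorm1)
    (abs_snd_le_of_abs_symm hhom htri hsym hnorm2) hx r s hs

theorem stmt_19 (α : ℝ) (hα : Irrational α)
    (hwa : ∀ ε : ℝ, 0 < ε → ∀ Q : ℤ, ∃ q : ℤ, Q < q ∧ 0 < q ∧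
      ∃ p : ℤ, |(p : ℝ) / q - α| < ε / (q : ℝ) ^ 2)
    (F : ℝ × ℝ → ℝ)
    (hnonneg : ∀ P, 0 ≤ F P)
    (hzero : ∀ P, F P = 0 ↔ P = 0)
    (hhom : ∀ (t : ℝ) (P), F (t • P) = |t| * F P)
    (htri : ∀ P Q, F (P + Q) ≤ F P + F Q)
    (hsym : ∀ x y : ℝ, F (x, y) = F (|x|, |y|))
    (hnorm1 : F (1, 0) = 1) (hnorm2 : F (0, 1) = 1) :
    ∀ ε' : ℝ, 0 < ε' → ∀ T : ℝ, ∃ t : ℝ, T < t ∧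
      ∀ r s : ℤ, 0 < s →
        1 - ε' ≤ F ((s : ℝ) / t, t * ((s : ℝ) * α - (r : ℝ))) :=
  stmt_19_general α hα hwa F hhom htri hsym hnorm1 hnorm2
end
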